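/- arXiv:2402.05074 — 3 statements merged into one kernel-verified Lean document; each statement's English description precedes it below -/
import Mathlib

section
/- (Theorem 1 together with Corollaries 1 and 2: upper bound for an arbitrary measurement scheme.) Let d ≥ 1, let B be a nonempty finite type, let (p_b, ρ_b)_{b∈B} be an ensemble of density matrices on ℂ^d, let (R_b)_{b∈B} be nonnegative reals, and let σ_b := (1+R_b)⁻¹ · (ρ_b + (R_b/d) · I). Let 𝒳 be any nonempty set of POVMs indexed by B (representing a measurement scheme such as global measurements, LO, or LOCC). Define P_X(η) := sSup { ∑_b p_b · Re Tr(M_b ρ_b) : (M_b) ∈ 𝒳 } and P_X(ε) := sSup { ∑_b p_b · Re Tr(M_b σ_b) : (M_b) ∈ 𝒳 }. Then P_X(η) ≤ (1 + max_{b∈B} R_b) · P_X(ε). -/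
open Matrix
open scoped ComplexOrder

/-- A density matrix: positive semidefinite with unit trace. -/
def IsDensityMatrix {n : Type*} [Fintype n] [DecidableEq n] (ρ : Matrix n n ℂ) : Prop :=
  ρ.PosSemidef ∧ ρ.trace = 1

/-- A POVM: a family of positive semidefinite matrices summing to the identity. -/
def IsPOVM {n B : Type*} [Fintype n] [DecidableEq n] [Fintype B]
    (M : B → Matrix n n ℂ) : Prop :=
  (∀ b, (M b).PosSemidef) ∧ ∑ b, M b = 1

/-! The noisy state `σ = (1 + R)⁻¹ (ρ + (R/d) I)` satisfies `ρ ≤ (1 + R) σ` in the Loewner order,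
and `Tr (M ·)` is monotone for every positive semidefinite `M`; so each success probability with
the states `ρ_b` is at most `1 + max R` times the one with the states `σ_b`, for the same POVM.
Taking suprema needs only that the success probabilities with the `σ_b` are bounded, which holds
because `M_b ≤ I`. -/

namespace Matrix

variable {n 𝕜 : Type*} [Fintype n] [RCLike 𝕜]

open scoped MatrixOrder in
theorem PosSemidef.trace_mul_nonneg {A B : Matrix n n 𝕜} (hA : A.PosSemidef)
    (hB : B.PosSemidef) : 0 ≤ (A * B).trace := by
  classical
  obtain ⟨X, rfl⟩ := CStarAlgebra.nonneg_iff_eq_star_mul_self.mp hB.nonneg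
  rw [← Matrix.mul_assoc, trace_mul_comm, ← Matrix.mul_assoc]
  exact (hA.mul_mul_conjTranspose_same X).trace_nonneg

theorem PosSemidef.trace_mul_le_trace_mul {M A B : Matrix n n 𝕜} (hM : M.PosSemidef)
    (hAB : (B - A).PosSemidef) : (M * A).trace ≤ (M * B).trace := by
  have := hM.trace_mul_nonneg hAB
  rwa [Matrix.mul_sub, trace_sub, sub_nonneg] at this

end Matrix

namespace Matrix.PosSemidef

theorem inv_smul_add_smul_one {n : Type*} [DecidableEq n] {ρ : Matrix n n ℂ}
    (hρ : ρ.PosSemidef) {t c : ℝ} (ht : 0 ≤ t) (hc : 0 ≤ c) : (t⁻¹ • (ρ + c • 1)).PosSemidef :=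
  (hρ.add (PosSemidef.one.smul hc)).smul (inv_nonneg.mpr ht)

theorem re_trace_mul_le_mul_re_trace_mul_inv_smul {n : Type*} [Fintype n] [DecidableEq n]
    {M : Matrix n n ℂ} (hM : M.PosSemidef) (ρ : Matrix n n ℂ) {t c : ℝ} (ht : t ≠ 0) (hc : 0 ≤ c) :
    (M * ρ).trace.re ≤ t * (M * (t⁻¹ • (ρ + c • 1))).trace.re :=
  calc (M * ρ).trace.re
      ≤ (M * (ρ + c • 1)).trace.re :=
        (Complex.le_def.mp <| hM.trace_mul_le_trace_mul <| by simpa using PosSemidef.one.smul hc).1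
    _ = t * (M * (t⁻¹ • (ρ + c • 1))).trace.re := by
        rw [Matrix.mul_smul, trace_smul, Complex.smul_re, smul_eq_mul, mul_inv_cancel_left₀ ht]

end Matrix.PosSemidef

namespace IsPOVM

variable {n B : Type*} [Fintype n] [DecidableEq n] [Fintype B] {M : B → Matrix n n ℂ}

theorem posSemidef_one_sub (hM : IsPOVM M) (b : B) : (1 - M b).PosSemidef := by
  classical
  rw [← hM.2, ← Finset.sum_erase_eq_sub (Finset.mem_univ b)]
  exact posSemidef_sum _ fun b' _ => hM.1 b'

theorem re_trace_mul_le {σ : Matrix n n ℂ} (hM : IsPOVM M) (hσ : σ.PosSemidef) (b : B) :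
    (M b * σ).trace.re ≤ σ.trace.re := by
  have := (Complex.le_def.mp (hσ.trace_mul_le_trace_mul (hM.posSemidef_one_sub b))).1
  rwa [Matrix.mul_one, trace_mul_comm] at this

end IsPOVM

theorem csSup_le_mul_csSup {α : Type*} {s : Set α} {f g : α → ℝ} {c : ℝ} (hs : s.Nonempty)
    (hc : 0 ≤ c) (hg : BddAbove {x | ∃ a ∈ s, x = g a}) (hfg : ∀ a ∈ s, f a ≤ c * g a) :
    sSup {x | ∃ a ∈ s, x = f a} ≤ c * sSup {x | ∃ a ∈ s, x = g a} := by
  obtain ⟨a₀, ha₀⟩ := hs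
  refine csSup_le ⟨f a₀, a₀, ha₀, rfl⟩ ?_
  rintro _ ⟨a, ha, rfl⟩
  exact (hfg a ha).trans (mul_le_mul_of_nonneg_left (le_csSup hg ⟨a, ha, rfl⟩) hc)

theorem stmt2_general {d : ℕ} {B : Type*} [Fintype B] [Nonempty B]
    (p : B → ℝ) (ρ : B → Matrix (Fin d) (Fin d) ℂ)
    (hp : ∀ b, 0 ≤ p b)
    (hρ : ∀ b, IsDensityMatrix (ρ b))
    (R : B → ℝ) (hR : ∀ b, 0 ≤ R b)
    (σ : B → Matrix (Fin d) (Fin d) ℂ)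
    (hσ : ∀ b, σ b = ((1 + R b)⁻¹ : ℝ) •
      (ρ b + ((R b / d : ℝ)) • (1 : Matrix (Fin d) (Fin d) ℂ)))
    (𝒳 : Set (B → Matrix (Fin d) (Fin d) ℂ))
    (h𝒳ne : 𝒳.Nonempty) (h𝒳 : ∀ M ∈ 𝒳, IsPOVM M) :
    sSup { x : ℝ | ∃ M ∈ 𝒳, x = ∑ b, p b * ((M b * ρ b).trace).re } ≤
      (1 + Finset.univ.sup' Finset.univ_nonempty R) *
        sSup { x : ℝ | ∃ M ∈ 𝒳, x = ∑ b, p b * ((M b * σ b).trace).re } := by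
  set Rmax := Finset.univ.sup' Finset.univ_nonempty R
  have hRmax (b : B) : R b ≤ Rmax := Finset.le_sup' R (Finset.mem_univ b)
  have hRd (b : B) : 0 ≤ R b / d := div_nonneg (hR b) d.cast_nonneg
  have hσpsd (b : B) : (σ b).PosSemidef :=
    hσ b ▸ (hρ b).1.inv_smul_add_smul_one (by linarith [hR b]) (hRd b)
  have hρσ (M : B → Matrix (Fin d) (Fin d) ℂ) (hM : IsPOVM M) (b : B) :
      (M b * ρ b).trace.re ≤ (1 + Rmax) * (M b * σ b).trace.re :=
    calc (M b * ρ b).trace.re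
        ≤ (1 + R b) * (M b * σ b).trace.re := hσ b ▸
          (hM.1 b).re_trace_mul_le_mul_re_trace_mul_inv_smul _ (by linarith [hR b]) (hRd b)
      _ ≤ (1 + Rmax) * (M b * σ b).trace.re := by
          gcongr
          · exact (Complex.le_def.mp ((hM.1 b).trace_mul_nonneg (hσpsd b))).1
          · exact hRmax b
  have hRmax_nonneg : 0 ≤ 1 + Rmax := by
    linarith [hR (Classical.arbitrary B), hRmax (Classical.arbitrary B)]
  refine csSup_le_mul_csSup h𝒳ne hRmax_nonneg ⟨∑ b, p b * (σ b).trace.re, ?_⟩ fun M hM => ?_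
  · rintro _ ⟨M, hM, rfl⟩
    exact Finset.sum_le_sum fun b _ =>
      mul_le_mul_of_nonneg_left ((h𝒳 M hM).re_trace_mul_le (hσpsd b) b) (hp b)
  · rw [Finset.mul_sum]
    refine Finset.sum_le_sum fun b _ => ?_
    rw [mul_left_comm]
    exact mul_le_mul_of_nonneg_left (hρσ M (h𝒳 M hM) b) (hp b)

theorem stmt2 {d : ℕ} (hd : 1 ≤ d) {B : Type*} [Fintype B] [Nonempty B]
    (p : B → ℝ) (ρ : B → Matrix (Fin d) (Fin d) ℂ)
    (hp : ∀ b, 0 ≤ p b) (hpsum : ∑ b, p b = 1)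
    (hρ : ∀ b, IsDensityMatrix (ρ b))
    (R : B → ℝ) (hR : ∀ b, 0 ≤ R b)
    (σ : B → Matrix (Fin d) (Fin d) ℂ)
    (hσ : ∀ b, σ b = ((1 + R b)⁻¹ : ℝ) •
      (ρ b + ((R b / d : ℝ)) • (1 : Matrix (Fin d) (Fin d) ℂ)))
    (𝒳 : Set (B → Matrix (Fin d) (Fin d) ℂ))
    (h𝒳ne : 𝒳.Nonempty) (h𝒳 : ∀ M ∈ 𝒳, IsPOVM M) :
    sSup { x : ℝ | ∃ M ∈ 𝒳, x = ∑ b, p b * ((M b * ρ b).trace).re } ≤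
      (1 + Finset.univ.sup' Finset.univ_nonempty R) *
        sSup { x : ℝ | ∃ M ∈ 𝒳, x = ∑ b, p b * ((M b * σ b).trace).re } :=
  stmt2_general p ρ hp hρ R hR σ hσ 𝒳 h𝒳ne h𝒳
end

section
/- (Theorem 2: lower bound for an arbitrary measurement scheme.) Let d ≥ 1, let B be a nonempty finite type, let (p_b, ρ_b)_{b∈B} be an ensemble of density matrices on ℂ^d, let (R_b)_{b∈B} be nonnegative reals, and let σ_b := (1+R_b)⁻¹ · (ρ_b + (R_b/d) · I). Let 𝒳 be any nonempty set of POVMs indexed by B. Define P_X(η) := sSup { ∑_b p_b · Re Tr(M_b ρ_b) : (M_b) ∈ 𝒳 } and P_X(ε) := sSup { ∑_b p_b · Re Tr(M_b σ_b) : (M_b) ∈ 𝒳 }. Then P_X(η) ≥ (1 + min_{b∈B} R_b) · P_X(ε) − max_{b∈B} (R_b · p_b). -/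
open Matrix
open scoped ComplexOrder

/-!
Writing `σ_b = (1 + R_b)⁻¹ (ρ_b + (R_b / d) I)`, each term of the noisy success probability is
`p_b (1 + R_b)⁻¹ (Tr(M_b ρ_b) + (R_b / d) Tr M_b)`. Multiplying by `1 + min R ≤ 1 + R_b` removes the
factor `(1 + R_b)⁻¹`, and since `∑_b Tr M_b = d` the identity contributions add up to at most
`max_b R_b p_b`. This bound holds for every POVM, so it passes to the suprema.
-/

open scoped MatrixOrder in
theorem Matrix.PosSemidef.trace_mul_nonneg_s5 {n 𝕜 : Type*} [Fintype n] [RCLike 𝕜]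
    {A B : Matrix n n 𝕜} (hA : A.PosSemidef) (hB : B.PosSemidef) : 0 ≤ (A * B).trace := by
  classical
  obtain ⟨X, rfl⟩ := CStarAlgebra.nonneg_iff_eq_star_mul_self.mp hA.nonneg
  rw [star_eq_conjTranspose, Matrix.mul_assoc, trace_mul_comm]
  exact (hB.mul_mul_conjTranspose_same X).trace_nonneg

theorem Matrix.PosSemidef.re_trace_mul_nonneg {n : Type*} [Fintype n]
    {A B : Matrix n n ℂ} (hA : A.PosSemidef) (hB : B.PosSemidef) : 0 ≤ ((A * B).trace).re :=
  (Complex.nonneg_iff.mp (hA.trace_mul_nonneg_s5 hB)).1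

theorem re_trace_mul_smul_add_smul_one {n : Type*} [Fintype n] [DecidableEq n]
    (M ρ : Matrix n n ℂ) (a c : ℝ) :
    ((M * (a • (ρ + c • (1 : Matrix n n ℂ)))).trace).re =
      a * (((M * ρ).trace).re + c * (M.trace).re) := by
  simp only [Matrix.mul_smul, Matrix.mul_add, Matrix.mul_one, trace_smul, trace_add,
    Complex.real_smul, Complex.re_ofReal_mul, Complex.add_re]

section POVM

variable {n B : Type*} [Fintype n] [DecidableEq n] [Fintype B] {M : B → Matrix n n ℂ}

def successProbability (p : B → ℝ) (M ρ : B → Matrix n n ℂ) : ℝ :=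
  ∑ b, p b * ((M b * ρ b).trace).re

noncomputable def noisyState (R : ℝ) (ρ : Matrix n n ℂ) : Matrix n n ℂ :=
  ((1 + R)⁻¹ : ℝ) • (ρ + (R / Fintype.card n : ℝ) • (1 : Matrix n n ℂ))

theorem IsPOVM.posSemidef_one_sub_s5 (hM : IsPOVM M) (b : B) : (1 - M b).PosSemidef := by
  classical
  rw [← hM.2, ← Finset.sum_erase_eq_sub (Finset.mem_univ b)]
  exact posSemidef_sum _ fun c _ => hM.1 c

theorem IsPOVM.re_trace_mul_le_one (hM : IsPOVM M) (b : B) {ρ : Matrix n n ℂ}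
    (hρ : IsDensityMatrix ρ) : ((M b * ρ).trace).re ≤ 1 := by
  have h := (hM.posSemidef_one_sub_s5 b).re_trace_mul_nonneg hρ.1
  rw [Matrix.sub_mul, Matrix.one_mul, trace_sub, Complex.sub_re, hρ.2, Complex.one_re] at h
  linarith

theorem IsPOVM.sum_re_trace (hM : IsPOVM M) : ∑ b, ((M b).trace).re = (Fintype.card n : ℝ) := by
  rw [← Complex.re_sum, ← trace_sum, hM.2, trace_one, Complex.natCast_re]

theorem IsPOVM.successProbability_le_sum (hM : IsPOVM M) {p : B → ℝ} (hp : ∀ b, 0 ≤ p b)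
    {ρ : B → Matrix n n ℂ} (hρ : ∀ b, IsDensityMatrix (ρ b)) :
    successProbability p M ρ ≤ ∑ b, p b :=
  Finset.sum_le_sum fun b _ =>
    mul_le_of_le_one_right (hp b) (hM.re_trace_mul_le_one b (hρ b))

theorem IsPOVM.mul_successProbability_noisyState_le (hM : IsPOVM M) {p R : B → ℝ}
    (hp : ∀ b, 0 ≤ p b) (hR : ∀ b, 0 ≤ R b) {ρ : B → Matrix n n ℂ}
    (hρ : ∀ b, (ρ b).PosSemidef) {r K : ℝ} (hr : ∀ b, r ≤ R b) (hK : ∀ b, R b * p b ≤ K)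
    (hK0 : 0 ≤ K) :
    (1 + r) * successProbability p M (fun b => noisyState (R b) (ρ b)) ≤
      successProbability p M ρ + K := by
  set D : ℝ := (Fintype.card n : ℝ)
  have hD : 0 ≤ D := Nat.cast_nonneg _
  have hm : ∀ b, 0 ≤ ((M b).trace).re := fun b => (Complex.nonneg_iff.mp (hM.1 b).trace_nonneg).1
  have hterm : ∀ b, (1 + r) * (p b * ((M b * noisyState (R b) (ρ b)).trace).re) ≤
      p b * ((M b * ρ b).trace).re + R b * p b * (((M b).trace).re / D) := by
    intro b
    set t := ((M b * ρ b).trace).re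
    set m := ((M b).trace).re
    have hX : 0 ≤ p b * (t + R b / D * m) :=
      mul_nonneg (hp b) (add_nonneg ((hM.1 b).re_trace_mul_nonneg (hρ b))
        (mul_nonneg (div_nonneg (hR b) hD) (hm b)))
    have hc : (1 + r) * (1 + R b)⁻¹ ≤ 1 := by
      rw [← div_eq_mul_inv, div_le_one (by linarith [hR b])]
      linarith [hr b]
    rw [noisyState, re_trace_mul_smul_add_smul_one]
    calc (1 + r) * (p b * ((1 + R b)⁻¹ * (t + R b / D * m)))
        = (1 + r) * (1 + R b)⁻¹ * (p b * (t + R b / D * m)) := by ring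
      _ ≤ p b * (t + R b / D * m) := mul_le_of_le_one_left hX hc
      _ = p b * t + R b * p b * (m / D) := by ring
  have hidentity : ∑ b, R b * p b * (((M b).trace).re / D) ≤ K := by
    calc ∑ b, R b * p b * (((M b).trace).re / D)
        ≤ ∑ b, K * (((M b).trace).re / D) :=
          Finset.sum_le_sum fun b _ => mul_le_mul_of_nonneg_right (hK b)
            (div_nonneg (hm b) hD)
      _ = K * (D / D) := by rw [← Finset.mul_sum, ← Finset.sum_div, hM.sum_re_trace]
      _ ≤ K := mul_le_of_le_one_right hK0 (div_self_le_one D)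
  calc (1 + r) * successProbability p M (fun b => noisyState (R b) (ρ b))
      ≤ ∑ b, (p b * ((M b * ρ b).trace).re + R b * p b * (((M b).trace).re / D)) := by
        rw [successProbability, Finset.mul_sum]
        exact Finset.sum_le_sum fun b _ => hterm b
    _ ≤ successProbability p M ρ + K := by
        rw [Finset.sum_add_distrib]
        exact add_le_add le_rfl hidentity

end POVM

theorem mul_sSup_le_sSup_add {α : Type*} {s : Set α} (hs : s.Nonempty) {f g : α → ℝ}
    (hg : BddAbove {x | ∃ a ∈ s, x = g a}) {c K : ℝ} (hc : 0 < c)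
    (h : ∀ a ∈ s, c * f a ≤ g a + K) :
    c * sSup {x | ∃ a ∈ s, x = f a} ≤ sSup {x | ∃ a ∈ s, x = g a} + K := by
  rw [mul_comm, ← le_div_iff₀ hc]
  obtain ⟨a₀, ha₀⟩ := hs
  refine csSup_le ⟨f a₀, a₀, ha₀, rfl⟩ ?_
  rintro _ ⟨a, ha, rfl⟩
  rw [le_div_iff₀ hc, mul_comm]
  exact (h a ha).trans (add_le_add_left (le_csSup hg ⟨a, ha, rfl⟩) K)

theorem stmt5_general {d : ℕ} {B : Type*} [Fintype B] [Nonempty B]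
    (p : B → ℝ) (ρ : B → Matrix (Fin d) (Fin d) ℂ)
    (hp : ∀ b, 0 ≤ p b)
    (hρ : ∀ b, IsDensityMatrix (ρ b))
    (R : B → ℝ) (hR : ∀ b, 0 ≤ R b)
    (σ : B → Matrix (Fin d) (Fin d) ℂ)
    (hσ : ∀ b, σ b = ((1 + R b)⁻¹ : ℝ) •
      (ρ b + ((R b / d : ℝ)) • (1 : Matrix (Fin d) (Fin d) ℂ)))
    (𝒳 : Set (B → Matrix (Fin d) (Fin d) ℂ))
    (h𝒳ne : 𝒳.Nonempty) (h𝒳 : ∀ M ∈ 𝒳, IsPOVM M) :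
    sSup { x : ℝ | ∃ M ∈ 𝒳, x = ∑ b, p b * ((M b * ρ b).trace).re } ≥
      (1 + Finset.univ.inf' Finset.univ_nonempty R) *
          sSup { x : ℝ | ∃ M ∈ 𝒳, x = ∑ b, p b * ((M b * σ b).trace).re } -
        Finset.univ.sup' Finset.univ_nonempty (fun b => R b * p b) := by
  obtain rfl : σ = fun b => noisyState (R b) (ρ b) :=
    funext fun b => by rw [hσ b, noisyState, Fintype.card_fin]
  have hbdd : BddAbove {x | ∃ M ∈ 𝒳, x = successProbability p M ρ} :=
    ⟨∑ b, p b, by rintro _ ⟨M, hM, rfl⟩; exact (h𝒳 M hM).successProbability_le_sum hp hρ⟩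
  have hr : ∀ b, Finset.univ.inf' Finset.univ_nonempty R ≤ R b :=
    fun b => Finset.inf'_le R (Finset.mem_univ b)
  have hK : ∀ b, R b * p b ≤ Finset.univ.sup' Finset.univ_nonempty (fun b => R b * p b) :=
    fun b => Finset.le_sup' (fun b => R b * p b) (Finset.mem_univ b)
  have hK0 := (mul_nonneg (hR (Classical.arbitrary B)) (hp _)).trans (hK _)
  have hr0 : 0 < 1 + Finset.univ.inf' Finset.univ_nonempty R := by
    linarith [Finset.le_inf' Finset.univ_nonempty R fun b _ => hR b]
  rw [ge_iff_le, sub_le_iff_le_add]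
  exact mul_sSup_le_sSup_add h𝒳ne hbdd hr0 fun M hM =>
    (h𝒳 M hM).mul_successProbability_noisyState_le hp hR (fun b => (hρ b).1) hr hK hK0

theorem stmt5 {d : ℕ} (hd : 1 ≤ d) {B : Type*} [Fintype B] [Nonempty B]
    (p : B → ℝ) (ρ : B → Matrix (Fin d) (Fin d) ℂ)
    (hp : ∀ b, 0 ≤ p b) (hpsum : ∑ b, p b = 1)
    (hρ : ∀ b, IsDensityMatrix (ρ b))
    (R : B → ℝ) (hR : ∀ b, 0 ≤ R b)
    (σ : B → Matrix (Fin d) (Fin d) ℂ)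
    (hσ : ∀ b, σ b = ((1 + R b)⁻¹ : ℝ) •
      (ρ b + ((R b / d : ℝ)) • (1 : Matrix (Fin d) (Fin d) ℂ)))
    (𝒳 : Set (B → Matrix (Fin d) (Fin d) ℂ))
    (h𝒳ne : 𝒳.Nonempty) (h𝒳 : ∀ M ∈ 𝒳, IsPOVM M) :
    sSup { x : ℝ | ∃ M ∈ 𝒳, x = ∑ b, p b * ((M b * ρ b).trace).re } ≥
      (1 + Finset.univ.inf' Finset.univ_nonempty R) *
          sSup { x : ℝ | ∃ M ∈ 𝒳, x = ∑ b, p b * ((M b * σ b).trace).re } -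
        Finset.univ.sup' Finset.univ_nonempty (fun b => R b * p b) :=
  stmt5_general p ρ hp hρ R hR σ hσ 𝒳 h𝒳ne h𝒳
end

section
/- (Remark 2: nonlocality without entanglement for the noisy Bell ensemble, i.e., the ratio P(η)/P(ε) exceeds 1.) In ℂ²⊗ℂ² (matrices indexed by Fin 2 × Fin 2), let ρ₁ = |φ⁺⟩⟨φ⁺| and ρ₂ = |φ⁻⟩⟨φ⁻| be the Bell-state projectors and σᵢ := (ρᵢ + I/2)/3 for i = 1, 2. Then: (a) there exists a POVM (M₁, M₂) with (1/2)·Re Tr(M₁ ρ₁) + (1/2)·Re Tr(M₂ ρ₂) = 1, so the two equiprobable Bell states can be discriminated perfectly; and (b) for every POVM (M₁, M₂), (1/2)·Re Tr(M₁ σ₁) + (1/2)·Re Tr(M₂ σ₂) ≤ 2/3, so the states of the closest separable ensemble cannot be discriminated perfectly; hence sSup over all POVMs of the success probability equals 1 for the Bell ensemble and equals 2/3 for the closest separable ensemble. -/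
open Matrix
open scoped ComplexOrder

/-- The Bell state `|φ⁺⟩ = (|00⟩ + |11⟩)/√2` as a vector in `ℂ² ⊗ ℂ²`. -/
noncomputable def phiPlus : Fin 2 × Fin 2 → ℂ := fun x =>
  if x = (0, 0) then (Real.sqrt 2)⁻¹ else if x = (1, 1) then (Real.sqrt 2)⁻¹ else 0

/-- The Bell state `|φ⁻⟩ = (|00⟩ − |11⟩)/√2` as a vector in `ℂ² ⊗ ℂ²`. -/
noncomputable def phiMinus : Fin 2 × Fin 2 → ℂ := fun x =>
  if x = (0, 0) then (Real.sqrt 2)⁻¹ else if x = (1, 1) then -(Real.sqrt 2)⁻¹ else 0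

/-!
Write `P(M; τ₁, τ₂)` for the success probability. The Bell states are orthonormal, so the
projective measurement `(ρ₁, 1 - ρ₁)` identifies them with certainty, and no POVM can exceed
`1` against two pure states. For the noisy ensemble, `σᵢ = ρᵢ / 3 + I / 6` and `M₁ + M₂ = 1`
with `Tr 1 = 4` give `P(M; σ₁, σ₂) = (P(M; ρ₁, ρ₂) + 1) / 3`, so its optimum is `(1 + 1) / 3`.
-/

section Discrimination

variable {n : Type*} [Fintype n]

noncomputable def successProb (M₁ M₂ τ₁ τ₂ : Matrix n n ℂ) : ℝ :=
  (1 / 2 : ℝ) * ((M₁ * τ₁).trace).re + (1 / 2 : ℝ) * ((M₂ * τ₂).trace).re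

theorem trace_mul_vecMulVec_star (M : Matrix n n ℂ) (v : n → ℂ) :
    (M * vecMulVec v (star v)).trace = star v ⬝ᵥ M *ᵥ v := by
  rw [mul_vecMulVec, trace_vecMulVec, dotProduct_comm]

variable [DecidableEq n]

theorem sSup_successProb_eq {τ₁ τ₂ : Matrix n n ℂ} {p : ℝ}
    (hp : ∃ M₁ M₂ : Matrix n n ℂ, M₁.PosSemidef ∧ M₂.PosSemidef ∧ M₁ + M₂ = 1 ∧
      successProb M₁ M₂ τ₁ τ₂ = p)
    (hle : ∀ M₁ M₂ : Matrix n n ℂ, M₁.PosSemidef → M₂.PosSemidef → M₁ + M₂ = 1 →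
      successProb M₁ M₂ τ₁ τ₂ ≤ p) :
    sSup {x : ℝ | ∃ M₁ M₂ : Matrix n n ℂ, M₁.PosSemidef ∧ M₂.PosSemidef ∧ M₁ + M₂ = 1 ∧
      x = successProb M₁ M₂ τ₁ τ₂} = p := by
  obtain ⟨M₁, M₂, h₁, h₂, h, rfl⟩ := hp
  refine IsGreatest.csSup_eq ⟨⟨M₁, M₂, h₁, h₂, h, rfl⟩, ?_⟩
  rintro x ⟨N₁, N₂, hN₁, hN₂, hN, rfl⟩
  exact hle N₁ N₂ hN₁ hN₂ hN

theorem successProb_smul_add_smul_one {M₁ M₂ : Matrix n n ℂ} (h : M₁ + M₂ = 1)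
    (τ₁ τ₂ : Matrix n n ℂ) (c s : ℝ) :
    successProb M₁ M₂ (c • (τ₁ + s • 1)) (c • (τ₂ + s • 1))
      = c * (successProb M₁ M₂ τ₁ τ₂ + s * Fintype.card n / 2) := by
  have htr : (M₁.trace + M₂.trace).re = Fintype.card n := by
    rw [← trace_add, h, trace_one]
    simp
  simp only [successProb, Matrix.mul_smul, Matrix.mul_add, Matrix.mul_one, trace_smul, trace_add,
    Complex.real_smul, Complex.re_ofReal_mul, Complex.add_re] at htr ⊢
  rw [← htr]
  ring

theorem re_trace_mul_vecMulVec_le_one {w : n → ℂ} (hw : star w ⬝ᵥ w = 1)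
    {A B : Matrix n n ℂ} (hB : B.PosSemidef) (hAB : A + B = 1) :
    ((A * vecMulVec w (star w)).trace).re ≤ 1 := by
  have hsum : star w ⬝ᵥ A *ᵥ w + star w ⬝ᵥ B *ᵥ w = 1 := by
    rw [← dotProduct_add, ← add_mulVec, hAB, one_mulVec, hw]
  have hB_nonneg := (Complex.nonneg_iff.mp (hB.dotProduct_mulVec_nonneg w)).1
  have hsum_re := congrArg Complex.re hsum
  rw [Complex.add_re, Complex.one_re] at hsum_re
  rw [trace_mul_vecMulVec_star]
  linarith

theorem successProb_vecMulVec_le_one {u v : n → ℂ} (hu : star u ⬝ᵥ u = 1)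
    (hv : star v ⬝ᵥ v = 1) {M₁ M₂ : Matrix n n ℂ} (h₁ : M₁.PosSemidef) (h₂ : M₂.PosSemidef)
    (h : M₁ + M₂ = 1) :
    successProb M₁ M₂ (vecMulVec u (star u)) (vecMulVec v (star v)) ≤ 1 := by
  have hu_le := re_trace_mul_vecMulVec_le_one hu h₂ h
  have hv_le := re_trace_mul_vecMulVec_le_one hv h₁ (by rw [add_comm, h])
  rw [successProb]
  linarith

theorem posSemidef_one_sub_vecMulVec {u : n → ℂ} (hu : star u ⬝ᵥ u = 1) :
    (1 - vecMulVec u (star u)).PosSemidef := by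
  have hidem : vecMulVec u (star u) * vecMulVec u (star u) = vecMulVec u (star u) := by
    rw [vecMulVec_mul_vecMulVec, hu, one_smul]
  have hself : (1 - vecMulVec u (star u))ᴴ * (1 - vecMulVec u (star u))
      = 1 - vecMulVec u (star u) := by
    rw [conjTranspose_sub, conjTranspose_one, (posSemidef_vecMulVec_self_star u).isHermitian.eq,
      Matrix.sub_mul, Matrix.one_mul, Matrix.mul_sub, Matrix.mul_one, hidem, sub_self, sub_zero]
  rw [← hself]
  exact posSemidef_conjTranspose_mul_self _

theorem successProb_vecMulVec_eq_one {u v : n → ℂ} (hu : star u ⬝ᵥ u = 1)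
    (hv : star v ⬝ᵥ v = 1) (huv : star u ⬝ᵥ v = 0) :
    successProb (vecMulVec u (star u)) (1 - vecMulVec u (star u))
      (vecMulVec u (star u)) (vecMulVec v (star v)) = 1 := by
  rw [successProb, Matrix.sub_mul, Matrix.one_mul, vecMulVec_mul_vecMulVec,
    vecMulVec_mul_vecMulVec, hu, huv, one_smul, zero_smul, vecMulVec_zero, sub_zero,
    trace_vecMulVec, trace_vecMulVec, dotProduct_comm, hu, dotProduct_comm, hv]
  norm_num

end Discrimination

theorem ofReal_inv_sqrt_two_mul_self : ((√2 : ℝ) : ℂ)⁻¹ * ((√2 : ℝ) : ℂ)⁻¹ = 1 / 2 := by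
  rw [← mul_inv, ← Complex.ofReal_mul, Real.mul_self_sqrt zero_le_two]
  norm_num

theorem dotProduct_star_phiPlus_self : star phiPlus ⬝ᵥ phiPlus = 1 := by
  norm_num [dotProduct, Fintype.sum_prod_type, phiPlus, ofReal_inv_sqrt_two_mul_self]

theorem dotProduct_star_phiMinus_self : star phiMinus ⬝ᵥ phiMinus = 1 := by
  norm_num [dotProduct, Fintype.sum_prod_type, phiMinus, ofReal_inv_sqrt_two_mul_self]

theorem dotProduct_star_phiPlus_phiMinus : star phiPlus ⬝ᵥ phiMinus = 0 := by
  simp [dotProduct, Fintype.sum_prod_type, phiPlus, phiMinus]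

theorem stmt11
    (ρ₁ ρ₂ σ₁ σ₂ : Matrix (Fin 2 × Fin 2) (Fin 2 × Fin 2) ℂ)
    (hρ₁ : ρ₁ = vecMulVec phiPlus (star phiPlus))
    (hρ₂ : ρ₂ = vecMulVec phiMinus (star phiMinus))
    (hσ₁ : σ₁ = ((3 : ℝ)⁻¹) • (ρ₁ + ((2 : ℝ)⁻¹) • (1 : Matrix (Fin 2 × Fin 2) (Fin 2 × Fin 2) ℂ)))
    (hσ₂ : σ₂ = ((3 : ℝ)⁻¹) • (ρ₂ + ((2 : ℝ)⁻¹) • (1 : Matrix (Fin 2 × Fin 2) (Fin 2 × Fin 2) ℂ))) :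
    (∃ M₁ M₂ : Matrix (Fin 2 × Fin 2) (Fin 2 × Fin 2) ℂ,
        M₁.PosSemidef ∧ M₂.PosSemidef ∧ M₁ + M₂ = 1 ∧
        (1 / 2 : ℝ) * ((M₁ * ρ₁).trace).re + (1 / 2 : ℝ) * ((M₂ * ρ₂).trace).re = 1) ∧
    (∀ M₁ M₂ : Matrix (Fin 2 × Fin 2) (Fin 2 × Fin 2) ℂ,
        M₁.PosSemidef → M₂.PosSemidef → M₁ + M₂ = 1 →
        (1 / 2 : ℝ) * ((M₁ * σ₁).trace).re + (1 / 2 : ℝ) * ((M₂ * σ₂).trace).re ≤ 2 / 3) ∧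
    sSup { x : ℝ | ∃ M₁ M₂ : Matrix (Fin 2 × Fin 2) (Fin 2 × Fin 2) ℂ,
        M₁.PosSemidef ∧ M₂.PosSemidef ∧ M₁ + M₂ = 1 ∧
        x = (1 / 2 : ℝ) * ((M₁ * ρ₁).trace).re + (1 / 2 : ℝ) * ((M₂ * ρ₂).trace).re } = 1 ∧
    sSup { x : ℝ | ∃ M₁ M₂ : Matrix (Fin 2 × Fin 2) (Fin 2 × Fin 2) ℂ,
        M₁.PosSemidef ∧ M₂.PosSemidef ∧ M₁ + M₂ = 1 ∧
        x = (1 / 2 : ℝ) * ((M₁ * σ₁).trace).re + (1 / 2 : ℝ) * ((M₂ * σ₂).trace).re } = 2 / 3 := by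
  have hcard : (Fintype.card (Fin 2 × Fin 2) : ℝ) = 4 := by norm_num
  have hnoisy : ∀ M₁ M₂ : Matrix (Fin 2 × Fin 2) (Fin 2 × Fin 2) ℂ, M₁ + M₂ = 1 →
      successProb M₁ M₂ σ₁ σ₂ = (successProb M₁ M₂ ρ₁ ρ₂ + 1) / 3 := by
    intro M₁ M₂ h
    rw [hσ₁, hσ₂, successProb_smul_add_smul_one h, hcard]
    ring
  have hle : ∀ M₁ M₂ : Matrix (Fin 2 × Fin 2) (Fin 2 × Fin 2) ℂ, M₁.PosSemidef →
      M₂.PosSemidef → M₁ + M₂ = 1 → successProb M₁ M₂ ρ₁ ρ₂ ≤ 1 := by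
    rw [hρ₁, hρ₂]
    exact fun _ _ ↦ successProb_vecMulVec_le_one dotProduct_star_phiPlus_self
      dotProduct_star_phiMinus_self
  have hnoisy_le : ∀ M₁ M₂ : Matrix (Fin 2 × Fin 2) (Fin 2 × Fin 2) ℂ, M₁.PosSemidef →
      M₂.PosSemidef → M₁ + M₂ = 1 → successProb M₁ M₂ σ₁ σ₂ ≤ 2 / 3 := fun M₁ M₂ h₁ h₂ h ↦ by
    linarith [hnoisy M₁ M₂ h, hle M₁ M₂ h₁ h₂ h]
  obtain ⟨hpsd, hpsd_compl, hsum⟩ :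
      ρ₁.PosSemidef ∧ (1 - ρ₁).PosSemidef ∧ ρ₁ + (1 - ρ₁) = 1 := by
    rw [hρ₁]
    exact ⟨posSemidef_vecMulVec_self_star _,
      posSemidef_one_sub_vecMulVec dotProduct_star_phiPlus_self, add_sub_cancel _ _⟩
  have hperfect : successProb ρ₁ (1 - ρ₁) ρ₁ ρ₂ = 1 := by
    rw [hρ₁, hρ₂]
    exact successProb_vecMulVec_eq_one dotProduct_star_phiPlus_self
      dotProduct_star_phiMinus_self dotProduct_star_phiPlus_phiMinus
  have hnoisy_opt : successProb ρ₁ (1 - ρ₁) σ₁ σ₂ = 2 / 3 := by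
    rw [hnoisy _ _ hsum, hperfect]
    norm_num
  exact ⟨⟨_, _, hpsd, hpsd_compl, hsum, hperfect⟩, hnoisy_le,
    sSup_successProb_eq ⟨_, _, hpsd, hpsd_compl, hsum, hperfect⟩ hle,
    sSup_successProb_eq ⟨_, _, hpsd, hpsd_compl, hsum, hnoisy_opt⟩ hnoisy_le⟩
end
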